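/- arXiv:2508.04265 — 2 statements merged into one kernel-verified Lean document; each statement's English description precedes it below -/
import Mathlib

section
/- Let f : D → ℝ^d be a function with ℓ2-sensitivity Δ_f, i.e., ‖f(D) − f(D')‖₂ ≤ Δ_f for all neighboring datasets D, D'. Then the Gaussian mechanism G_f(D) := f(D) + N(0, σ²Δ_f² I_d), which adds independent centered Gaussian noise of standard deviation σΔ_f to each coordinate, satisfies (α, α/(2σ²))-Rényi differential privacy for every α > 1. -/
open MeasureTheory ProbabilityTheory
open scoped ENNReal

open Real
open scoped NNReal

lemma lintegral_pi_prod : ∀ {n : ℕ} (μ : Fin n → Measure ℝ) [∀ i, SigmaFinite (μ i)]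
    (g : Fin n → ℝ → ℝ≥0∞), (∀ i, Measurable (g i)) →
    ∫⁻ y, ∏ i, g i (y i) ∂Measure.pi μ = ∏ i, ∫⁻ t, g i t ∂μ i := by
  intro n
  induction n with
  | zero =>
    intro μ _ g hg
    simp [Measure.pi_univ]
  | succ n ih =>
    intro μ _ g hg
    rw [(MeasurePreserving.symm _ (measurePreserving_piFinSuccAbove μ 0)).lintegral_map_equiv
      (fun y => ∏ i, g i (y i)) (MeasurableEquiv.piFinSuccAbove (fun _ : Fin (n+1) => ℝ) 0).symm]
    simp_rw [MeasurableEquiv.piFinSuccAbove_symm_apply, Fin.insertNthEquiv,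
      Fin.prod_univ_succ, Fin.insertNth_zero]
    simp only [Fin.zero_succAbove, Equiv.coe_fn_mk, Fin.cons_zero, Fin.cons_succ, cast_eq]
    rw [lintegral_prod_mul (f := g 0) (g := fun w : Fin n → ℝ => ∏ x : Fin n, g x.succ (w x))
      (hg 0).aemeasurable
      (Finset.measurable_prod Finset.univ
        (fun i _ => (hg i.succ).comp (measurable_pi_apply i))).aemeasurable]
    rw [ih (fun j => μ j.succ) (fun j => g j.succ) (fun j => hg j.succ)]

lemma pi_withDensity_prod {n : ℕ} (μ : Fin n → Measure ℝ) [∀ i, SigmaFinite (μ i)]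
    (g : Fin n → ℝ → ℝ≥0∞) (hg : ∀ i, Measurable (g i))
    [∀ i, SigmaFinite ((μ i).withDensity (g i))] :
    (Measure.pi μ).withDensity (fun y => ∏ i, g i (y i))
      = Measure.pi (fun i => (μ i).withDensity (g i)) := by
  refine (Measure.pi_eq (μ := fun i => (μ i).withDensity (g i)) fun s hs => ?_).symm
  rw [withDensity_apply _ (MeasurableSet.univ_pi hs),
    ← lintegral_indicator (MeasurableSet.univ_pi hs)]
  have key : ∀ y : Fin n → ℝ, (Set.univ.pi s).indicator (fun y => ∏ i, g i (y i)) y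
      = ∏ i, (s i).indicator (g i) (y i) := by
    intro y
    by_cases hy : y ∈ Set.univ.pi s
    · rw [Set.indicator_of_mem hy]
      exact Finset.prod_congr rfl fun i _ =>
        (Set.indicator_of_mem (hy i (Set.mem_univ i)) _).symm
    · rw [Set.indicator_of_notMem hy]
      rw [Set.mem_univ_pi] at hy
      push_neg at hy
      obtain ⟨i, hi⟩ := hy
      exact (Finset.prod_eq_zero (Finset.mem_univ i) (Set.indicator_of_notMem hi _)).symm
  simp_rw [key]
  rw [lintegral_pi_prod μ _ (fun i => (hg i).indicator (hs i))]
  exact Finset.prod_congr rfl fun i _ => by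
    rw [lintegral_indicator (hs i), withDensity_apply _ (hs i)]

lemma gaussianReal_eq_withDensity_ratio (μ μ' : ℝ) {v : ℝ≥0} (hv : v ≠ 0) :
    gaussianReal μ v = (gaussianReal μ' v).withDensity
      (fun t => gaussianPDF μ v t / gaussianPDF μ' v t) := by
  rw [gaussianReal_of_var_ne_zero μ hv, gaussianReal_of_var_ne_zero μ' hv,
    ← withDensity_mul _ (g := fun t => gaussianPDF μ v t / gaussianPDF μ' v t)
      (measurable_gaussianPDF μ' v)
      ((measurable_gaussianPDF μ v).div (measurable_gaussianPDF μ' v))]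
  congr 1
  ext t
  show gaussianPDF μ v t = gaussianPDF μ' v t * (gaussianPDF μ v t / gaussianPDF μ' v t)
  rw [ENNReal.mul_div_cancel (gaussianPDF_pos μ' hv t).ne' ENNReal.ofReal_ne_top]

lemma gaussianPDFReal_ratio (μ μ' : ℝ) {v : ℝ≥0} (hv : v ≠ 0) (t : ℝ) :
    gaussianPDFReal μ v t / gaussianPDFReal μ' v t
      = Real.exp (((t - μ') ^ 2 - (t - μ) ^ 2) / (2 * (v : ℝ))) := by
  have hV : 0 < (v : ℝ) := by exact_mod_cast pos_iff_ne_zero.mpr hv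
  have hc : (Real.sqrt (2 * π * (v : ℝ)))⁻¹ ≠ 0 := by
    refine inv_ne_zero ?_
    refine (Real.sqrt_pos.mpr ?_).ne'
    positivity
  rw [gaussianPDFReal, gaussianPDFReal, mul_div_mul_left _ _ hc, ← Real.exp_sub]
  congr 1
  ring

lemma gaussian_ratio_rpow_mul_pdf (μ μ' : ℝ) {v : ℝ≥0} (hv : v ≠ 0) (α : ℝ) (t : ℝ) :
    gaussianPDFReal μ' v t * (gaussianPDFReal μ v t / gaussianPDFReal μ' v t) ^ α
      = Real.exp (α * (α - 1) * (μ - μ') ^ 2 / (2 * (v : ℝ)))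
        * gaussianPDFReal (μ' + α * (μ - μ')) v t := by
  have hV : 0 < (v : ℝ) := by exact_mod_cast pos_iff_ne_zero.mpr hv
  rw [gaussianPDFReal_ratio μ μ' hv t,
    Real.rpow_def_of_pos (Real.exp_pos _), Real.log_exp]
  rw [gaussianPDFReal, gaussianPDFReal, mul_assoc, ← Real.exp_add]
  conv_rhs => rw [mul_left_comm, ← Real.exp_add]
  congr 1
  field_simp
  ring

lemma lintegral_gaussian_ratio_rpow (μ μ' : ℝ) {v : ℝ≥0} (hv : v ≠ 0) (α : ℝ) :
    ∫⁻ t, ENNReal.ofReal (((gaussianPDF μ v t / gaussianPDF μ' v t).toReal) ^ α)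
        ∂(gaussianReal μ' v)
      = ENNReal.ofReal (Real.exp (α * (α - 1) * (μ - μ') ^ 2 / (2 * (v : ℝ)))) := by
  have hmeas : Measurable fun t =>
      ENNReal.ofReal (((gaussianPDF μ v t / gaussianPDF μ' v t).toReal) ^ α) :=
    (((measurable_gaussianPDF μ v).div (measurable_gaussianPDF μ' v)).ennreal_toReal.pow_const
      _).ennreal_ofReal
  have hpt : ∀ t, gaussianPDF μ' v t
        * ENNReal.ofReal (((gaussianPDF μ v t / gaussianPDF μ' v t).toReal) ^ α)
      = ENNReal.ofReal (Real.exp (α * (α - 1) * (μ - μ') ^ 2 / (2 * (v : ℝ)))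
          * gaussianPDFReal (μ' + α * (μ - μ')) v t) := by
    intro t
    have h1 : (gaussianPDF μ v t / gaussianPDF μ' v t).toReal
        = gaussianPDFReal μ v t / gaussianPDFReal μ' v t := by
      rw [ENNReal.toReal_div, gaussianPDF, gaussianPDF,
        ENNReal.toReal_ofReal (gaussianPDFReal_nonneg _ _ _),
        ENNReal.toReal_ofReal (gaussianPDFReal_nonneg _ _ _)]
    rw [h1, show gaussianPDF μ' v t = ENNReal.ofReal (gaussianPDFReal μ' v t) from rfl,
      ← ENNReal.ofReal_mul (gaussianPDFReal_nonneg μ' v t)]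
    exact congrArg _ (gaussian_ratio_rpow_mul_pdf μ μ' hv α t)
  rw [gaussianReal_of_var_ne_zero μ' hv,
    lintegral_withDensity_eq_lintegral_mul _ (measurable_gaussianPDF μ' v) hmeas]
  simp only [Pi.mul_apply]
  simp_rw [hpt, ENNReal.ofReal_mul (Real.exp_pos _).le]
  rw [lintegral_const_mul _ ((measurable_gaussianPDFReal (μ' + α * (μ - μ')) v).ennreal_ofReal),
    lintegral_gaussianPDFReal_eq_one _ hv, mul_one]

/-- Rényi divergence of order `α` between two measures:
`D_α(P‖Q) = (1/(α−1)) · log ∫ (dP/dQ)^α dQ`. -/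
noncomputable def renyiDiv {Ω : Type*} [MeasurableSpace Ω] (α : ℝ) (P Q : Measure Ω) : ℝ :=
  (α - 1)⁻¹ * Real.log (∫ x, ((P.rnDeriv Q x).toReal) ^ α ∂Q)

/-- The RDP guarantee of the Gaussian mechanism: if `f` has `ℓ2`-sensitivity `Δf`, then
the mechanism `G_f(D) = f(D) + N(0, σ²Δf² I_d)` satisfies `(α, α/(2σ²))`-RDP for every
`α > 1`; i.e. for all neighboring datasets, the Rényi divergence between the output
Gaussian distributions is at most `α/(2σ²)`. -/
theorem gaussian_mechanism_rdp {D : Type*} (Neighbor : D → D → Prop)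
    (d : ℕ) (f : D → EuclideanSpace ℝ (Fin d)) (Δf σ : ℝ) (hΔ : 0 ≤ Δf) (hσ : 0 < σ)
    (hsens : ∀ x x', Neighbor x x' → ‖f x - f x'‖ ≤ Δf)
    (α : ℝ) (hα : 1 < α) :
    ∀ x x', Neighbor x x' →
      renyiDiv α
        (Measure.pi fun i => gaussianReal (f x i) ((σ ^ 2 * Δf ^ 2).toNNReal))
        (Measure.pi fun i => gaussianReal (f x' i) ((σ ^ 2 * Δf ^ 2).toNNReal))
        ≤ α / (2 * σ ^ 2) := by
  intro x x' hxx'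
  have hα0 : 0 < α := lt_trans one_pos hα
  have hrhs : 0 ≤ α / (2 * σ ^ 2) := by positivity
  set v : ℝ≥0 := (σ ^ 2 * Δf ^ 2).toNNReal with hv_def
  by_cases hΔ0 : Δf = 0
  · -- degenerate case: the two measures coincide
    have hfeq : f x = f x' := by
      have h1 := hsens x x' hxx'
      rw [hΔ0] at h1
      exact sub_eq_zero.mp (norm_eq_zero.mp (le_antisymm h1 (norm_nonneg _)))
    rw [hfeq]
    set Q : Measure (Fin d → ℝ) :=
      Measure.pi fun i => gaussianReal (f x' i) v with hQ
    haveI : IsProbabilityMeasure Q := by rw [hQ]; infer_instance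
    have h0 : (fun y => ((Q.rnDeriv Q y).toReal) ^ α) =ᵐ[Q] (fun _ => (1 : ℝ)) :=
      (Measure.rnDeriv_self Q).mono fun y hy => by simp [hy]
    have h1 : (∫ y, ((Q.rnDeriv Q y).toReal) ^ α ∂Q) = 1 := by
      rw [integral_congr_ae h0]
      simp
    unfold renyiDiv
    rw [h1, Real.log_one, mul_zero]
    exact hrhs
  · have hΔpos : 0 < Δf := lt_of_le_of_ne hΔ (Ne.symm hΔ0)
    have hVpos : 0 < σ ^ 2 * Δf ^ 2 := by positivity
    have hv : v ≠ 0 := by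
      rw [hv_def]
      exact (Real.toNNReal_pos.mpr hVpos).ne'
    have hVcoe : ((v : ℝ)) = σ ^ 2 * Δf ^ 2 := Real.coe_toNNReal _ hVpos.le
    set P : Measure (Fin d → ℝ) := Measure.pi fun i => gaussianReal (f x i) v with hP
    set Q : Measure (Fin d → ℝ) := Measure.pi fun i => gaussianReal (f x' i) v with hQ
    haveI : IsProbabilityMeasure Q := by rw [hQ]; infer_instance
    set g : Fin d → ℝ → ℝ≥0∞ :=
      fun i t => gaussianPDF (f x i) v t / gaussianPDF (f x' i) v t with hg_def
    have hgmeas : ∀ i, Measurable (g i) := fun i =>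
      (measurable_gaussianPDF _ _).div (measurable_gaussianPDF _ _)
    haveI hsf : ∀ i, SigmaFinite ((gaussianReal (f x' i) v).withDensity (g i)) := fun i => by
      rw [hg_def, ← gaussianReal_eq_withDensity_ratio (f x i) (f x' i) hv]
      infer_instance
    have hPQ : P = Q.withDensity (fun y => ∏ i, g i (y i)) := by
      rw [hP, hQ, pi_withDensity_prod _ _ hgmeas]
      congr 1
      funext i
      exact gaussianReal_eq_withDensity_ratio _ _ hv
    have hGmeas : Measurable (fun y : Fin d → ℝ => ∏ i, g i (y i)) :=
      Finset.measurable_prod _ fun i _ => (hgmeas i).comp (measurable_pi_apply i)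
    have hrn : P.rnDeriv Q =ᵐ[Q] fun y => ∏ i, g i (y i) := by
      rw [hPQ]
      exact Measure.rnDeriv_withDensity Q hGmeas
    have hint : (∫ y, ((P.rnDeriv Q y).toReal) ^ α ∂Q)
        = Real.exp (α * (α - 1) * (∑ i, (f x i - f x' i) ^ 2) / (2 * (v : ℝ))) := by
      have h2 : (∫ y, ((P.rnDeriv Q y).toReal) ^ α ∂Q)
          = ∫ y, ((∏ i, g i (y i)).toReal) ^ α ∂Q :=
        integral_congr_ae (hrn.mono fun y hy => by dsimp only; rw [hy])
      rw [h2]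
      have h3 : ∀ y : Fin d → ℝ, ((∏ i, g i (y i)).toReal) ^ α
          = ∏ i, ((g i (y i)).toReal) ^ α := by
        intro y
        rw [ENNReal.toReal_prod, ← Real.finset_prod_rpow _ _ (fun i _ => ENNReal.toReal_nonneg) α]
      simp_rw [h3]
      have hm : Measurable (fun y : Fin d → ℝ => ∏ i, ((g i (y i)).toReal) ^ α) :=
        Finset.measurable_prod _ fun i _ =>
          (((hgmeas i).comp (measurable_pi_apply i)).ennreal_toReal).pow_const α
      rw [integral_eq_lintegral_of_nonneg_ae (ae_of_all _ fun y =>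
          Finset.prod_nonneg fun i _ => Real.rpow_nonneg ENNReal.toReal_nonneg α)
        hm.aestronglyMeasurable]
      have h4 : ∀ y : Fin d → ℝ, ENNReal.ofReal (∏ i, ((g i (y i)).toReal) ^ α)
          = ∏ i, ENNReal.ofReal (((g i (y i)).toReal) ^ α) :=
        fun y => ENNReal.ofReal_prod_of_nonneg fun i _ =>
          Real.rpow_nonneg ENNReal.toReal_nonneg α
      simp_rw [h4]
      rw [hQ, lintegral_pi_prod _ _
        (fun i => ((hgmeas i).ennreal_toReal.pow_const α).ennreal_ofReal)]
      have h5 : ∀ i : Fin d, ∫⁻ t, ENNReal.ofReal (((g i t).toReal) ^ α)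
            ∂(gaussianReal (f x' i) v)
          = ENNReal.ofReal (Real.exp (α * (α - 1) * (f x i - f x' i) ^ 2 / (2 * (v : ℝ)))) :=
        fun i => lintegral_gaussian_ratio_rpow (f x i) (f x' i) hv α
      simp_rw [h5]
      rw [← ENNReal.ofReal_prod_of_nonneg (fun i _ => (Real.exp_pos _).le),
        ENNReal.toReal_ofReal (Finset.prod_nonneg fun i _ => (Real.exp_pos _).le),
        ← Real.exp_sum]
      congr 1
      rw [← Finset.sum_div, ← Finset.mul_sum]
    have hS : (∑ i, (f x i - f x' i) ^ 2) ≤ Δf ^ 2 := by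
      have h6 : (∑ i, (f x i - f x' i) ^ 2) = ‖f x - f x'‖ ^ 2 := by
        rw [EuclideanSpace.norm_eq,
          Real.sq_sqrt (Finset.sum_nonneg fun i _ => sq_nonneg _)]
        refine Finset.sum_congr rfl fun i _ => ?_
        rw [PiLp.sub_apply, Real.norm_eq_abs, sq_abs]
      rw [h6]
      exact pow_le_pow_left₀ (norm_nonneg _) (hsens x x' hxx') 2
    unfold renyiDiv
    rw [hint, Real.log_exp]
    have hne : α - 1 ≠ 0 := by linarith
    have h7 : (α - 1)⁻¹ * (α * (α - 1) * (∑ i, (f x i - f x' i) ^ 2) / (2 * (v : ℝ)))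
        = α * (∑ i, (f x i - f x' i) ^ 2) / (2 * (v : ℝ)) := by
      field_simp
    rw [h7, hVcoe]
    calc α * (∑ i, (f x i - f x' i) ^ 2) / (2 * (σ ^ 2 * Δf ^ 2))
        ≤ α * Δf ^ 2 / (2 * (σ ^ 2 * Δf ^ 2)) := by gcongr
      _ = α / (2 * σ ^ 2) := by
          field_simp
end

section
/- For every α > 1 and real numbers μ, μ' and σ > 0, the Rényi divergence of order α between the one-dimensional Gaussian distributions N(μ, σ²) and N(μ', σ²) equals α(μ − μ')²/(2σ²). -/
open MeasureTheory ProbabilityTheory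
open scoped ENNReal

/-- The Rényi divergence of order `α > 1` between `N(μ, σ²)` and `N(μ', σ²)` equals
`α(μ − μ')²/(2σ²)`. -/
theorem renyiDiv_gaussianReal (α μ μ' σ : ℝ) (hα : 1 < α) (hσ : 0 < σ) :
    renyiDiv α (gaussianReal μ ((σ ^ 2).toNNReal)) (gaussianReal μ' ((σ ^ 2).toNNReal)) =
      α * (μ - μ') ^ 2 / (2 * σ ^ 2) := by
  have hσ2 : (0:ℝ) < σ ^ 2 := by positivity
  set v : NNReal := (σ ^ 2).toNNReal with hv_def
  have hvR : (v : ℝ) = σ ^ 2 := Real.coe_toNNReal _ hσ2.le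
  have hv : v ≠ 0 := by
    rw [← NNReal.coe_ne_zero, hvR]; exact hσ2.ne'
  set m : ℝ := α * μ + (1 - α) * μ' with hm
  set c : ℝ := α * (α - 1) * (μ - μ') ^ 2 / (2 * σ ^ 2) with hc
  have hQ : gaussianReal μ' v = volume.withDensity (gaussianPDF μ' v) :=
    gaussianReal_of_var_ne_zero _ hv
  -- the Radon-Nikodym derivative
  have hrn : (gaussianReal μ v).rnDeriv (gaussianReal μ' v) =ᵐ[volume]
      fun x ↦ (gaussianPDF μ' v x)⁻¹ * gaussianPDF μ v x := by
    have h1 : (gaussianReal μ v).rnDeriv (volume.withDensity (gaussianPDF μ' v)) =ᵐ[volume]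
        fun x ↦ (gaussianPDF μ' v x)⁻¹ * (gaussianReal μ v).rnDeriv volume x :=
      Measure.rnDeriv_withDensity_right (gaussianReal μ v) volume
        (measurable_gaussianPDF μ' v).aemeasurable
        (ae_of_all _ fun x ↦ (gaussianPDF_pos μ' hv x).ne')
        (ae_of_all _ fun _ ↦ ENNReal.ofReal_ne_top)
    have h2 := rnDeriv_gaussianReal μ v
    rw [hQ]
    filter_upwards [h1, h2] with x hx1 hx2
    rw [hx1, hx2]
  -- the integral
  have hint : (∫ x, (((gaussianReal μ v).rnDeriv (gaussianReal μ' v) x).toReal) ^ α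
      ∂(gaussianReal μ' v)) = Real.exp c := by
    set g : ℝ → ℝ :=
      fun x ↦ (((gaussianReal μ v).rnDeriv (gaussianReal μ' v) x).toReal) ^ α with hg
    have hQ' : volume.withDensity (gaussianPDF μ' v)
        = volume.withDensity (fun x ↦ ((gaussianPDFReal μ' v x).toNNReal : ℝ≥0∞)) := rfl
    rw [hQ, hQ', integral_withDensity_eq_integral_smul
      ((measurable_gaussianPDFReal μ' v).real_toNNReal) g]
    have heq : (fun x ↦ (gaussianPDFReal μ' v x).toNNReal • g x)
        =ᵐ[volume] fun x ↦ Real.exp c * gaussianPDFReal m v x := by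
      filter_upwards [hrn] with x hx
      have hq : 0 < gaussianPDFReal μ' v x := gaussianPDFReal_pos _ _ _ hv
      have hp : 0 < gaussianPDFReal μ v x := gaussianPDFReal_pos _ _ _ hv
      have h2σ : (2 : ℝ) * σ ^ 2 ≠ 0 := by positivity
      have hσ0 : σ ≠ 0 := hσ.ne'
      have hA : (0:ℝ) < Real.sqrt (2 * Real.pi * σ ^ 2) := by positivity
      have htoReal : (((gaussianReal μ v).rnDeriv (gaussianReal μ' v) x).toReal)
          = (gaussianPDFReal μ' v x)⁻¹ * gaussianPDFReal μ v x := by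
        rw [hx]
        simp only [gaussianPDF]
        rw [ENNReal.toReal_mul, ENNReal.toReal_inv, ENNReal.toReal_ofReal hq.le,
          ENNReal.toReal_ofReal hp.le]
      simp only [hg, NNReal.smul_def, Real.coe_toNNReal _ hq.le]
      rw [htoReal]
      simp only [gaussianPDFReal, hvR]
      have hratio : ((Real.sqrt (2 * Real.pi * σ ^ 2))⁻¹ *
            Real.exp (-(x - μ') ^ 2 / (2 * σ ^ 2)))⁻¹ *
            ((Real.sqrt (2 * Real.pi * σ ^ 2))⁻¹ * Real.exp (-(x - μ) ^ 2 / (2 * σ ^ 2)))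
          = Real.exp (-(x - μ) ^ 2 / (2 * σ ^ 2) - -(x - μ') ^ 2 / (2 * σ ^ 2)) := by
        rw [Real.exp_sub]
        field_simp
      rw [hratio, ← Real.exp_mul, smul_eq_mul, mul_assoc, ← Real.exp_add]
      have hexp : -(x - μ') ^ 2 / (2 * σ ^ 2) +
            (-(x - μ) ^ 2 / (2 * σ ^ 2) - -(x - μ') ^ 2 / (2 * σ ^ 2)) * α
          = c + -(x - m) ^ 2 / (2 * σ ^ 2) := by
        simp only [hm, hc]
        field_simp
        ring
      rw [hexp, Real.exp_add]
      ring
    rw [integral_congr_ae heq, integral_const_mul, integral_gaussianPDFReal_eq_one m hv, mul_one]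
  rw [renyiDiv, hint, Real.log_exp, hc]
  have hα1 : α - 1 ≠ 0 := sub_ne_zero.2 hα.ne'
  field_simp
end
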